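/- (Lower bound on the looptree pseudo-distance.) If s ≺ r ≺ t, then d(s,t) ≥ min(x_r^t, Δ_r − x_r^t). -/
import Mathlib


open Set Filter

/-- The infimum `I_s^t` of `f` over the interval `[s, t]`. -/
noncomputable def infIcc (f : ℝ → ℝ) (s t : ℝ) : ℝ := sInf (f '' Set.Icc s t)

/-- The genealogical relation `s ≼ t` associated with the excursion-type function `f`,
where `fl` is the left-limit function of `f` (with the convention `fl 0 = 0`):
`s ≼ t ↔ s ≤ t ∧ f(s-) ≤ I_s^t`. -/
def Prec (f fl : ℝ → ℝ) (s t : ℝ) : Prop := s ≤ t ∧ fl s ≤ infIcc f s t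

/-- The jump `Δ_t = f(t) - f(t-)` of `f` at `t` (with the convention `fl 0 = 0`
this gives `Δ_0 = 0` for `f 0 = 0`). -/
def jump (f fl : ℝ → ℝ) (t : ℝ) : ℝ := f t - fl t

/-- The position `x_s^t = I_s^t - f(s-)` of the ancestral line of `t` in the loop at `s`. -/
noncomputable def xpos (f fl : ℝ → ℝ) (s t : ℝ) : ℝ := infIcc f s t - fl s

/-- Distance on the cycle of length `D`: `δ_D(a,b) = min (|a-b|, D - |a-b|)`. -/
def cycleDist (D a b : ℝ) : ℝ := min |a - b| (D - |a - b|)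

/-- `d₀(s,t) = ∑_{s ≺ r ≼ t} δ_{Δ_r}(0, x_r^t)`. -/
noncomputable def dZero (f fl : ℝ → ℝ) (s t : ℝ) : ℝ :=
  ∑' r : {r : ℝ // Prec f fl s r ∧ s ≠ r ∧ Prec f fl r t},
    cycleDist (jump f fl r.1) 0 (xpos f fl r.1 t)

/-- The most recent common ancestor `s ∧ t` of `s` and `t`: the greatest common
`≼`-lower bound of `s` and `t` in `[0,1]`, realized as the supremum of the set of
common lower bounds. -/
noncomputable def mca (f fl : ℝ → ℝ) (s t : ℝ) : ℝ :=
  sSup {r : ℝ | r ∈ Set.Icc (0:ℝ) 1 ∧ Prec f fl r s ∧ Prec f fl r t}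

/-- The looptree pseudo-distance
`d(s,t) = δ_{Δ_{s∧t}}(x_{s∧t}^s, x_{s∧t}^t) + d₀(s∧t, s) + d₀(s∧t, t)`. -/
noncomputable def looptreeDist (f fl : ℝ → ℝ) (s t : ℝ) : ℝ :=
  cycleDist (jump f fl (mca f fl s t)) (xpos f fl (mca f fl s t) s) (xpos f fl (mca f fl s t) t)
    + dZero f fl (mca f fl s t) s + dZero f fl (mca f fl s t) t


section AuxLemmas

open Set Filter

lemma infIcc_le_apply (f : ℝ → ℝ) {a b x : ℝ} (h0 : 0 ≤ a) (hb : b ≤ 1)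
    (hnn : ∀ u ∈ Set.Icc (0:ℝ) 1, 0 ≤ f u) (hx : x ∈ Set.Icc a b) :
    infIcc f a b ≤ f x := by
  apply csInf_le
  · refine ⟨0, ?_⟩
    rintro y ⟨u, hu, rfl⟩
    exact hnn u ⟨h0.trans hu.1, hu.2.trans hb⟩
  · exact ⟨x, hx, rfl⟩

lemma le_infIcc (f : ℝ → ℝ) {a b c : ℝ} (hab : a ≤ b)
    (h : ∀ u ∈ Set.Icc a b, c ≤ f u) : c ≤ infIcc f a b := by
  refine le_csInf ⟨f a, a, Set.left_mem_Icc.2 hab, rfl⟩ ?_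
  rintro y ⟨u, hu, rfl⟩
  exact h u hu

lemma infIcc_self (f : ℝ → ℝ) (a : ℝ) : infIcc f a a = f a := by
  simp [infIcc, Set.Icc_self]

lemma le_leftLim (f fl : ℝ → ℝ)
    (hf_left : ∀ t ∈ Set.Ioc (0:ℝ) 1, Tendsto f (nhdsWithin t (Set.Iio t)) (nhds (fl t)))
    {w v c : ℝ} (hv : v ∈ Set.Ioc (0:ℝ) 1) (hwv : w < v)
    (h : ∀ u ∈ Set.Ioo w v, c ≤ f u) : c ≤ fl v := by
  refine ge_of_tendsto (hf_left v hv) ?_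
  filter_upwards [Ioo_mem_nhdsLT_of_mem ⟨hwv, le_refl v⟩] with u hu using h u hu

lemma fl_nonneg (f fl : ℝ → ℝ)
    (hf_left : ∀ t ∈ Set.Ioc (0:ℝ) 1, Tendsto f (nhdsWithin t (Set.Iio t)) (nhds (fl t)))
    (hfl0 : fl 0 = 0) (hnn : ∀ u ∈ Set.Icc (0:ℝ) 1, 0 ≤ f u)
    {v : ℝ} (hv : v ∈ Set.Icc (0:ℝ) 1) : 0 ≤ fl v := by
  rcases eq_or_lt_of_le hv.1 with h | h
  · rw [← h, hfl0]
  · exact le_leftLim f fl hf_left ⟨h, hv.2⟩ h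
      (fun u hu => hnn u ⟨hu.1.le, (hu.2.le).trans hv.2⟩)

lemma sum_xpos_le (f fl : ℝ → ℝ)
    (hf_left : ∀ t ∈ Set.Ioc (0:ℝ) 1, Tendsto f (nhdsWithin t (Set.Iio t)) (nhds (fl t)))
    (hfl0 : fl 0 = 0) (hnn : ∀ u ∈ Set.Icc (0:ℝ) 1, 0 ≤ f u)
    (s t : ℝ) (hs0 : 0 ≤ s) (ht1 : t ≤ 1) :
    ∀ (n : ℕ) (u : Finset ℝ), u.card = n →
      (∀ r' ∈ u, Prec f fl s r' ∧ s ≠ r' ∧ Prec f fl r' t) →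
      ∀ h : u.Nonempty, ∑ r' ∈ u, (infIcc f r' t - fl r') ≤ infIcc f (u.max' h) t := by
  intro n
  induction n with
  | zero =>
    intro u hc hP h
    rw [Finset.card_eq_zero] at hc
    subst hc
    exact absurd h (by simp)
  | succ n ih =>
    intro u hc hP h
    set M := u.max' h with hM
    have hMu : M ∈ u := u.max'_mem h
    have hPM := hP M hMu
    have hsM : s < M := lt_of_le_of_ne hPM.1.1 hPM.2.1
    have hMt : M ≤ t := hPM.2.2.1
    have hM0 : 0 < M := lt_of_le_of_lt hs0 hsM
    have hM1 : M ≤ 1 := hMt.trans ht1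
    have hflM : 0 ≤ fl M := fl_nonneg f fl hf_left hfl0 hnn ⟨hM0.le, hM1⟩
    rw [← Finset.sum_erase_add u _ hMu]
    by_cases he : (u.erase M).Nonempty
    · have hcard : (u.erase M).card = n := by
        rw [Finset.card_erase_of_mem hMu, hc]; rfl
      have hsum := ih (u.erase M) hcard
        (fun r' hr' => hP r' (Finset.mem_of_mem_erase hr')) he
      set M' := (u.erase M).max' he with hM'
      have hM'u : M' ∈ u.erase M := Finset.max'_mem _ he
      have hM'0 : 0 ≤ M' :=
        hs0.trans (hP M' (Finset.mem_of_mem_erase hM'u)).1.1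
      have hM'M : M' < M :=
        lt_of_le_of_ne (u.le_max' M' (Finset.mem_of_mem_erase hM'u))
          (Finset.ne_of_mem_erase hM'u)
      have h1 : infIcc f M' t ≤ fl M := by
        apply le_leftLim f fl hf_left ⟨hM0, hM1⟩ hM'M
        intro x hx
        exact infIcc_le_apply f hM'0 ht1 hnn ⟨hx.1.le, hx.2.le.trans hMt⟩
      linarith
    · rw [Finset.not_nonempty_iff_eq_empty] at he
      rw [he, Finset.sum_empty]
      linarith

end AuxLemmas

/-- lower bound on the looptree pseudo-distance: if s ≺ r ≺ t then
d(s,t) ≥ min(x_r^t, Δ_r - x_r^t). -/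
theorem looptreeDist_lower_bound (f fl : ℝ → ℝ)
    (hf_right : ∀ t ∈ Set.Ico (0:ℝ) 1, Filter.Tendsto f (nhdsWithin t (Set.Ici t)) (nhds (f t)))
    (hf_left : ∀ t ∈ Set.Ioc (0:ℝ) 1, Filter.Tendsto f (nhdsWithin t (Set.Iio t)) (nhds (fl t)))
    (hfl0 : fl 0 = 0)
    (hf_nonneg : ∀ t ∈ Set.Icc (0:ℝ) 1, 0 ≤ f t)
    (hf_jump : ∀ t ∈ Set.Icc (0:ℝ) 1, fl t ≤ f t)
    (hf0 : f 0 = 0) (hf1 : f 1 = 0)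
    (s r t : ℝ) (hs : s ∈ Set.Icc (0:ℝ) 1) (hr : r ∈ Set.Icc (0:ℝ) 1)
    (ht : t ∈ Set.Icc (0:ℝ) 1)
    (hsr : Prec f fl s r) (hsr' : s ≠ r) (hrt : Prec f fl r t) (hrt' : r ≠ t) :
    min (xpos f fl r t) (jump f fl r - xpos f fl r t) ≤ looptreeDist f fl s t := by
  -- basic order facts
  have hst : s ≤ t := hsr.1.trans hrt.1
  have hs_lt_r : s < r := lt_of_le_of_ne hsr.1 hsr'
  have hr_lt_t : r < t := lt_of_le_of_ne hrt.1 hrt'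
  -- fl r ≥ infIcc f s r
  have hflr_ge : infIcc f s r ≤ fl r := by
    apply le_leftLim f fl hf_left ⟨lt_of_le_of_lt hs.1 hs_lt_r, hr.2⟩ hs_lt_r
    intro x hx
    exact infIcc_le_apply f hs.1 hr.2 hf_nonneg ⟨hx.1.le, hx.2.le⟩
  -- s ≼ t
  have hPst : Prec f fl s t := by
    refine ⟨hst, le_infIcc f hst ?_⟩
    intro u hu
    rcases le_total u r with h | h
    · exact hsr.2.trans (infIcc_le_apply f hs.1 hr.2 hf_nonneg ⟨hu.1, h⟩)
    · calc fl s ≤ infIcc f s r := hsr.2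
        _ ≤ fl r := hflr_ge
        _ ≤ infIcc f r t := hrt.2
        _ ≤ f u := infIcc_le_apply f hr.1 ht.2 hf_nonneg ⟨h, hu.2⟩
  -- s ≼ s
  have hPss : Prec f fl s s := by
    refine ⟨le_refl s, ?_⟩
    rw [infIcc_self]
    exact hf_jump s hs
  -- the mca of s and t is s itself
  have hmca : mca f fl s t = s := by
    have hsS : s ∈ {u : ℝ | u ∈ Set.Icc (0:ℝ) 1 ∧ Prec f fl u s ∧ Prec f fl u t} :=
      ⟨hs, hPss, hPst⟩
    have hub : ∀ u ∈ {u : ℝ | u ∈ Set.Icc (0:ℝ) 1 ∧ Prec f fl u s ∧ Prec f fl u t},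
        u ≤ s := fun u hu => hu.2.1.1
    exact le_antisymm (csSup_le ⟨s, hsS⟩ hub) (le_csSup ⟨s, hub⟩ hsS)
  -- properties of the summands of dZero s t
  set P : ℝ → Prop := fun r' => Prec f fl s r' ∧ s ≠ r' ∧ Prec f fl r' t with hP
  have hx_mem : ∀ j : ℝ, P j → 0 ≤ xpos f fl j t ∧ xpos f fl j t ≤ jump f fl j := by
    intro j hj
    have hj0 : 0 ≤ j := hs.1.trans hj.1.1
    have hjt : j ≤ t := hj.2.2.1
    constructor
    · have := hj.2.2.2
      simp only [xpos]; linarith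
    · have : infIcc f j t ≤ f j :=
        infIcc_le_apply f hj0 ht.2 hf_nonneg ⟨le_refl j, hjt⟩
      simp only [xpos, jump]; linarith
  have hterm : ∀ j : ℝ, P j →
      cycleDist (jump f fl j) 0 (xpos f fl j t)
        = min (xpos f fl j t) (jump f fl j - xpos f fl j t) := by
    intro j hj
    have h := hx_mem j hj
    rw [cycleDist, zero_sub, abs_neg, abs_of_nonneg h.1]
  have hterm_nonneg : ∀ j : ℝ, P j →
      0 ≤ cycleDist (jump f fl j) 0 (xpos f fl j t) := by
    intro j hj
    have h := hx_mem j hj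
    rw [hterm j hj]
    exact le_min h.1 (by linarith [h.2])
  have hterm_le : ∀ j : ℝ, P j →
      cycleDist (jump f fl j) 0 (xpos f fl j t) ≤ xpos f fl j t := by
    intro j hj
    rw [hterm j hj]
    exact min_le_left _ _
  -- summability of the family defining dZero s t
  have hsummable : Summable (fun j : {r' : ℝ // P r'} =>
      cycleDist (jump f fl j.1) 0 (xpos f fl j.1 t)) := by
    have hnn0 : (0 : {r' : ℝ // P r'} → ℝ) ≤ fun j =>
        cycleDist (jump f fl j.1) 0 (xpos f fl j.1 t) :=
      fun j => hterm_nonneg j.1 j.2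
    refine summable_of_sum_le (c := f t) hnn0 (fun v => ?_)
    have h1 : ∑ j ∈ v, cycleDist (jump f fl j.1) 0 (xpos f fl j.1 t)
        ≤ ∑ j ∈ v, (infIcc f j.1 t - fl j.1) :=
      Finset.sum_le_sum (fun j _ => hterm_le j.1 j.2)
    have hft : 0 ≤ f t := hf_nonneg t ht
    refine h1.trans ?_
    by_cases hv : v.Nonempty
    · set w : Finset ℝ := v.image Subtype.val with hw
      have hinj : ∀ x ∈ v, ∀ y ∈ v, Subtype.val x = Subtype.val y → x = y :=
        fun x _ y _ h => Subtype.ext h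
      have hsum_eq : ∑ r' ∈ w, (infIcc f r' t - fl r')
          = ∑ j ∈ v, (infIcc f j.1 t - fl j.1) := Finset.sum_image hinj
      have hwne : w.Nonempty := hv.image _
      have hwP : ∀ r' ∈ w, P r' := by
        intro r' hr'
        rcases Finset.mem_image.1 hr' with ⟨j, _, rfl⟩
        exact j.2
      have := sum_xpos_le f fl hf_left hfl0 hf_nonneg s t hs.1 ht.2 w.card w rfl
        hwP hwne
      have hMx : infIcc f (w.max' hwne) t ≤ f t := by
        have hM := hwP _ (w.max'_mem hwne)
        exact infIcc_le_apply f (hs.1.trans hM.1.1) ht.2 hf_nonneg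
          ⟨hM.2.2.1, le_refl t⟩
      rw [← hsum_eq]
      exact this.trans hMx
    · rw [Finset.not_nonempty_iff_eq_empty] at hv
      rw [hv, Finset.sum_empty]
      exact hft
  -- dZero s s = 0
  have hdss : dZero f fl s s = 0 := by
    haveI : IsEmpty {r' : ℝ // Prec f fl s r' ∧ s ≠ r' ∧ Prec f fl r' s} := by
      refine ⟨fun j => ?_⟩
      have h1 : s < j.1 := lt_of_le_of_ne j.2.1.1 j.2.2.1
      have h2 : j.1 ≤ s := j.2.2.2.1
      exact absurd h2 (not_le.2 h1)
    exact tsum_empty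
  -- the index r
  have hrP : P r := ⟨hsr, hsr', hrt⟩
  have hle_tsum : cycleDist (jump f fl r) 0 (xpos f fl r t) ≤ dZero f fl s t :=
    Summable.le_tsum hsummable ⟨r, hrP⟩ (fun j _ => hterm_nonneg j.1 j.2)
  -- positivity of the cycle term at s
  have hcyc : 0 ≤ cycleDist (jump f fl s) (xpos f fl s s) (xpos f fl s t) := by
    have hxss : xpos f fl s s = jump f fl s := by
      simp only [xpos, jump, infIcc_self]
    have hxst0 : 0 ≤ xpos f fl s t := by
      have := hPst.2; simp only [xpos]; linarith
    have hxstD : xpos f fl s t ≤ jump f fl s := by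
      have : infIcc f s t ≤ f s :=
        infIcc_le_apply f hs.1 ht.2 hf_nonneg ⟨le_refl s, hst⟩
      simp only [xpos, jump]; linarith
    have habs : |xpos f fl s s - xpos f fl s t| ≤ jump f fl s := by
      rw [hxss, abs_of_nonneg (by linarith)]
      linarith
    exact le_min (abs_nonneg _) (by linarith)
  -- conclusion
  rw [looptreeDist, hmca]
  rw [hterm r hrP] at hle_tsum
  linarith
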